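/- Let L be a finite-dimensional complex Lie algebra with a nondegenerate symmetric ℂ-bilinear form B, and let g and g̃ both be compact real forms of (L,B). Then there exists a ℂ-linear Lie algebra automorphism φ of L satisfying B(φ(x), φ(y)) = B(x,y) for all x,y ∈ L and φ(g) = g̃. In particular, g and g̃ are isomorphic as real Lie algebras via an isomorphism that is an isometry for the inner products induced by B. -/

import Mathlib

/-!
Setup: a finite-dimensional complex Lie algebra `L` with a nondegenerate symmetric
`ℂ`-bilinear form `B` (a "holomorphic inner product"), viewed also as a real Lie algebra.
-/

variable {L : Type*} [LieRing L] [LieAlgebra ℂ L]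

/-- A complex Lie algebra is in particular a real Lie algebra. -/
noncomputable instance instLieAlgebraRealOfComplex : LieAlgebra ℝ L :=
  { (inferInstance : Module ℝ L) with
    lie_smul := fun t x y => by
      rw [show t • y = (t : ℂ) • y from rfl, lie_smul,
        show (t : ℂ) • ⁅x, y⁆ = t • ⁅x, y⁆ from rfl] }

/-- `g` is a real form of the complex Lie algebra `L`:
`g ∩ i • g = {0}` and `g + i • g = L`. -/
def IsRealForm (g : LieSubalgebra ℝ L) : Prop :=
  (∀ x ∈ g, ∀ y ∈ g, x = Complex.I • y → x = 0) ∧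
  (∀ z : L, ∃ x ∈ g, ∃ y ∈ g, z = x + Complex.I • y)

/-- `g` is a real slice of `(L, B)`: a real form of `L` on which `B` is real-valued. -/
def IsRealSlice (B : LinearMap.BilinForm ℂ L) (g : LieSubalgebra ℝ L) : Prop :=
  IsRealForm g ∧ ∀ x ∈ g, ∀ y ∈ g, (B x y).im = 0

/-- A compact real form of `(L, B)`: a real slice on which `B` is positive definite. -/
def IsCompactRealForm (B : LinearMap.BilinForm ℂ L) (u : LieSubalgebra ℝ L) : Prop :=
  IsRealSlice B u ∧ ∀ x ∈ u, x ≠ 0 → 0 < (B x x).re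

/-- A Cartan involution of the metric `B|g`: an `ℝ`-linear involution `θ` of `g` such that
`(x, y) ↦ B x (θ y)` is a positive-definite (real-valued, symmetric) inner product on `g`. -/
def IsCartanInvolutionOfMetric (B : LinearMap.BilinForm ℂ L) (g : LieSubalgebra ℝ L)
    (θ : ↥g →ₗ[ℝ] ↥g) : Prop :=
  (∀ x, θ (θ x) = x) ∧
  (∀ x y : ↥g, B (θ x : L) (y : L) = B (x : L) (θ y : L)) ∧
  (∀ x : ↥g, x ≠ 0 → 0 < (B (x : L) (θ x : L)).re)

/-- A Cartan involution of Lie algebras of the metric `B|g`: a Cartan involution of the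
metric which is moreover a Lie algebra automorphism of `g`. -/
def IsCartanInvolutionOfLieAlgebras (B : LinearMap.BilinForm ℂ L) (g : LieSubalgebra ℝ L)
    (θ : ↥g →ₗ[ℝ] ↥g) : Prop :=
  IsCartanInvolutionOfMetric B g θ ∧ ∀ x y : ↥g, θ ⁅x, y⁆ = ⁅θ x, θ y⁆

/-!
Let `σ` and `τ` be the complex conjugations of `L` with respect to `g` and `g'`. Since `B` is
positive definite on `g`, `⟪x, y⟫ = B (σ x) y` is a Hermitian inner product on `L`, for which
`P = τ σ` is a positive operator; `P` is a Lie algebra automorphism preserving `B`, and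
`P σ P = σ`. The square root `φ = √P`, acting by `√λ` on the `λ`-eigenspaces of `P`, inherits
all three properties because eigenvalues multiply under the bracket and under `B`. Hence
`τ φ = P σ φ = φ (φ σ φ) = φ σ`, so `φ` maps the fixed points `g` of `σ` onto those `g'` of `τ`.
-/

theorem Function.Semiconj.image_fixedPoints {α β : Type*} {f : α → β} {fa : α → α}
    {fb : β → β} (hf : Function.Bijective f) (h : Function.Semiconj f fa fb) :
    f '' Function.fixedPoints fa = Function.fixedPoints fb := by
  ext y
  obtain ⟨x, rfl⟩ := hf.2 y
  rw [hf.1.mem_set_image, Function.mem_fixedPoints, Function.mem_fixedPoints, Function.IsFixedPt,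
    Function.IsFixedPt, ← h.eq, hf.1.eq_iff]

namespace LinearMap.IsPositive

variable {𝕜 E : Type*} [RCLike 𝕜] [NormedAddCommGroup E] [InnerProductSpace 𝕜 E]
  [FiniteDimensional 𝕜 E] {T : E →ₗ[𝕜] E}

noncomputable def sqrt (hT : T.IsPositive) : E →ₗ[𝕜] E :=
  (hT.isSymmetric.eigenvectorBasis rfl).toBasis.constr 𝕜 fun i =>
    (√(hT.isSymmetric.eigenvalues rfl i) : 𝕜) • hT.isSymmetric.eigenvectorBasis rfl i

theorem sqrt_apply_eigenvectorBasis (hT : T.IsPositive) (i : Fin (Module.finrank 𝕜 E)) :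
    hT.sqrt (hT.isSymmetric.eigenvectorBasis rfl i) =
      (√(hT.isSymmetric.eigenvalues rfl i) : 𝕜) • hT.isSymmetric.eigenvectorBasis rfl i := by
  unfold sqrt
  rw [← OrthonormalBasis.coe_toBasis, Module.Basis.constr_basis]

theorem sqrt_apply_of_apply_eq_smul (hT : T.IsPositive) {μ : ℝ} {v : E}
    (hv : T v = (μ : 𝕜) • v) : hT.sqrt v = (√μ : 𝕜) • v := by
  set b := hT.isSymmetric.eigenvectorBasis rfl
  set ev := hT.isSymmetric.eigenvalues rfl
  have hcoord (i) : (√(ev i) : 𝕜) * b.repr v i = √μ * b.repr v i := by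
    rcases eq_or_ne (b.repr v i) 0 with h | h
    · simp [h]
    have hev : (ev i : 𝕜) * b.repr v i = μ * b.repr v i := by
      rw [← hT.isSymmetric.eigenvectorBasis_apply_self_apply rfl v i, hv]
      simp [RCLike.real_smul_eq_coe_mul, b]
    rw [show ev i = μ by exact_mod_cast mul_right_cancel₀ h hev]
  calc hT.sqrt v = hT.sqrt (∑ i, b.repr v i • b i) := by rw [b.sum_repr]
    _ = ∑ i, (√μ : 𝕜) • (b.repr v i • b i) := by
      simp only [map_sum, map_smul, b, sqrt_apply_eigenvectorBasis, smul_smul]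
      exact Finset.sum_congr rfl fun i _ => by rw [mul_comm, hcoord, mul_comm]
    _ = (√μ : 𝕜) • v := by rw [← Finset.smul_sum, b.sum_repr]

theorem sqrt_comp_sqrt (hT : T.IsPositive) : hT.sqrt ∘ₗ hT.sqrt = T := by
  refine (hT.isSymmetric.eigenvectorBasis rfl).toBasis.ext fun i => ?_
  simp only [OrthonormalBasis.coe_toBasis, LinearMap.comp_apply, sqrt_apply_eigenvectorBasis,
    map_smul, smul_smul, hT.isSymmetric.apply_eigenvectorBasis, ← RCLike.ofReal_mul,
    Real.mul_self_sqrt (hT.nonneg_eigenvalues rfl i)]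

theorem compl₁₂_sqrt_sqrt (hT : T.IsPositive) {F : Type*} [AddCommGroup F] [Module 𝕜 F]
    {β : E →ₗ[𝕜] E →ₗ[𝕜] F} {Q ψ : F →ₗ[𝕜] F}
    (hψ : ∀ (μ : ℝ) (w : F), Q w = (μ : 𝕜) • w → ψ w = (√μ : 𝕜) • w)
    (hβ : β.compl₁₂ T T = β.compr₂ Q) : β.compl₁₂ hT.sqrt hT.sqrt = β.compr₂ ψ := by
  let b := hT.isSymmetric.eigenvectorBasis rfl
  let ev := hT.isSymmetric.eigenvalues rfl
  refine LinearMap.ext_basis b.toBasis b.toBasis fun i j => ?_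
  have hQ : Q (β (b i) (b j)) = ((ev i * ev j : ℝ) : 𝕜) • β (b i) (b j) := by
    have := LinearMap.congr_fun₂ hβ (b i) (b j)
    simp only [LinearMap.compl₁₂_apply, LinearMap.compr₂_apply, b,
      hT.isSymmetric.apply_eigenvectorBasis, map_smul, LinearMap.smul_apply, smul_smul] at this
    rw [← this, RCLike.ofReal_mul, mul_comm]
  simp only [OrthonormalBasis.coe_toBasis, LinearMap.compl₁₂_apply, LinearMap.compr₂_apply,
    hψ _ _ hQ, sqrt_apply_eigenvectorBasis, map_smul, LinearMap.smul_apply, smul_smul, b, ev,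
    Real.sqrt_mul (hT.nonneg_eigenvalues rfl i), RCLike.ofReal_mul, mul_comm]

theorem sqrt_comp_comp_sqrt (hT : T.IsPositive) {σ : E →ₛₗ[starRingEnd 𝕜] E}
    (hσ : T ∘ₛₗ σ ∘ₛₗ T = σ) : hT.sqrt ∘ₛₗ σ ∘ₛₗ hT.sqrt = σ := by
  let b := hT.isSymmetric.eigenvectorBasis rfl
  let ev := hT.isSymmetric.eigenvalues rfl
  refine b.toBasis.ext fun i => ?_
  have hσT := LinearMap.congr_fun hσ (b i)
  simp only [LinearMap.comp_apply, b, hT.isSymmetric.apply_eigenvectorBasis, map_smulₛₗ,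
    RCLike.conj_ofReal, RingHom.id_apply] at hσT
  simp only [OrthonormalBasis.coe_toBasis, LinearMap.comp_apply, b, sqrt_apply_eigenvectorBasis,
    map_smulₛₗ, RCLike.conj_ofReal, RingHom.id_apply]
  rcases eq_or_ne (ev i) 0 with h0 | hpos
  · simp only [ev] at h0
    simp [h0] at hσT ⊢
    exact hσT
  · have hTσ : T (σ (b i)) = (((ev i)⁻¹ : ℝ) : 𝕜) • σ (b i) := by
      conv_rhs => rw [← hσT]
      rw [smul_smul, ← RCLike.ofReal_mul, inv_mul_cancel₀ hpos, RCLike.ofReal_one, one_smul]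
    rw [hT.sqrt_apply_of_apply_eq_smul hTσ, smul_smul, ← RCLike.ofReal_mul,
      ← Real.sqrt_mul (hT.nonneg_eigenvalues rfl i), mul_inv_cancel₀ hpos, Real.sqrt_one,
      RCLike.ofReal_one, one_smul]

end LinearMap.IsPositive

open Complex

namespace IsRealForm

variable {u : LieSubalgebra ℝ L}

theorem eq_and_eq_of_add_I_smul_eq (hu : IsRealForm u) {a b a' b' : L} (ha : a ∈ u) (hb : b ∈ u)
    (ha' : a' ∈ u) (hb' : b' ∈ u) (h : a + I • b = a' + I • b') : a = a' ∧ b = b' := by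
  have hI : a - a' = I • (b' - b) := by
    rw [smul_sub]
    linear_combination (norm := module) h
  have ha : a - a' = 0 := hu.1 _ (sub_mem ha ha') _ (sub_mem hb' hb) hI
  rw [ha, eq_comm, smul_eq_zero] at hI
  exact ⟨sub_eq_zero.mp ha, (sub_eq_zero.mp (hI.resolve_left I_ne_zero)).symm⟩

theorem exists_conj (hu : IsRealForm u) :
    ∃ σ : L →ₛₗ[starRingEnd ℂ] L, ∀ a ∈ u, ∀ b ∈ u, σ (a + I • b) = a - I • b := by
  choose re hre im him hz using hu.2
  have hdecomp {a b : L} (ha : a ∈ u) (hb : b ∈ u) : re (a + I • b) = a ∧ im (a + I • b) = b :=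
    hu.eq_and_eq_of_add_I_smul_eq (hre _) (him _) ha hb (hz _).symm
  refine ⟨{ toFun := fun z => re z - I • im z, map_add' := ?_, map_smul' := ?_ }, ?_⟩
  · intro x y
    have hxy : x + y = (re x + re y) + I • (im x + im y) := by
      linear_combination (norm := module) hz x + hz y
    obtain ⟨h₁, h₂⟩ := hdecomp (add_mem (hre x) (hre y)) (add_mem (him x) (him y))
    simp only [hxy, h₁, h₂]
    module
  · intro c x
    have hcx : c • x = (c.re • re x - c.im • im x) + I • (c.im • re x + c.re • im x) := by
      conv_lhs => rw [hz x]
      simp only [← coe_smul]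
      match_scalars <;> simp [Complex.ext_iff]
    obtain ⟨h₁, h₂⟩ := hdecomp (sub_mem (u.smul_mem c.re (hre x)) (u.smul_mem c.im (him x)))
      (add_mem (u.smul_mem c.im (hre x)) (u.smul_mem c.re (him x)))
    simp only [hcx, h₁, h₂]
    simp only [← coe_smul]
    match_scalars <;> simp [Complex.ext_iff]
  · intro a ha b hb
    simp only [LinearMap.coe_mk, AddHom.coe_mk, hdecomp ha hb]

noncomputable def conj (hu : IsRealForm u) : L →ₛₗ[starRingEnd ℂ] L :=
  hu.exists_conj.choose

theorem conj_add_I_smul (hu : IsRealForm u) {a b : L} (ha : a ∈ u) (hb : b ∈ u) :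
    hu.conj (a + I • b) = a - I • b :=
  hu.exists_conj.choose_spec a ha b hb

theorem conj_of_mem (hu : IsRealForm u) {a : L} (ha : a ∈ u) : hu.conj a = a := by
  simpa using hu.conj_add_I_smul ha u.zero_mem

theorem conj_conj (hu : IsRealForm u) (z : L) : hu.conj (hu.conj z) = z := by
  obtain ⟨a, ha, b, hb, rfl⟩ := hu.2 z
  rw [hu.conj_add_I_smul ha hb, sub_eq_add_neg, ← smul_neg, hu.conj_add_I_smul ha (neg_mem hb),
    smul_neg, sub_neg_eq_add]

theorem conj_lie (hu : IsRealForm u) (x y : L) :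
    hu.conj ⁅x, y⁆ = ⁅hu.conj x, hu.conj y⁆ := by
  obtain ⟨a, ha, b, hb, rfl⟩ := hu.2 x
  obtain ⟨c, hc, d, hd, rfl⟩ := hu.2 y
  simp only [add_lie, lie_add, smul_lie, lie_smul, map_add, map_smulₛₗ, conj_I,
    hu.conj_of_mem ha, hu.conj_of_mem hb, hu.conj_of_mem hc, hu.conj_of_mem hd,
    hu.conj_of_mem (u.lie_mem ha hc), hu.conj_of_mem (u.lie_mem ha hd),
    hu.conj_of_mem (u.lie_mem hb hc), hu.conj_of_mem (u.lie_mem hb hd)]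

theorem coe_eq_fixedPoints_conj (hu : IsRealForm u) :
    (u : Set L) = Function.fixedPoints hu.conj := by
  ext z
  refine ⟨hu.conj_of_mem, fun hz => ?_⟩
  obtain ⟨a, ha, b, hb, rfl⟩ := hu.2 z
  have hb0 : (2 * I) • b = 0 := by
    have := hz.eq
    rw [hu.conj_add_I_smul ha hb] at this
    linear_combination (norm := module) -this
  rw [smul_eq_zero, or_iff_right (by simp)] at hb0
  simpa [hb0] using ha

end IsRealForm

section

variable {B : LinearMap.BilinForm ℂ L} {u : LieSubalgebra ℝ L}

theorem IsRealSlice.apply_conj_conj (hu : IsRealSlice B u) (x y : L) :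
    B (hu.1.conj x) (hu.1.conj y) = starRingEnd ℂ (B x y) := by
  obtain ⟨a, ha, b, hb, rfl⟩ := hu.1.2 x
  obtain ⟨c, hc, d, hd, rfl⟩ := hu.1.2 y
  have hreal {p q : L} (hp : p ∈ u) (hq : q ∈ u) : starRingEnd ℂ (B p q) = B p q :=
    conj_eq_iff_im.mpr (hu.2 p hp q hq)
  simp only [hu.1.conj_add_I_smul ha hb, hu.1.conj_add_I_smul hc hd, map_add, map_sub, map_smul,
    LinearMap.add_apply, LinearMap.sub_apply, LinearMap.smul_apply, smul_eq_mul, map_mul, conj_I,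
    hreal ha hc, hreal ha hd, hreal hb hc, hreal hb hd]
  ring

theorem IsRealSlice.apply_conj_conj_conj {g g' : LieSubalgebra ℝ L} (hg : IsRealSlice B g)
    (hg' : IsRealSlice B g') (x y : L) :
    B (hg.1.conj (hg'.1.conj (hg.1.conj x))) y = B (hg.1.conj x) (hg'.1.conj (hg.1.conj y)) := by
  set σ := hg.1.conj
  set τ := hg'.1.conj
  calc B (σ (τ (σ x))) y = B (σ (τ (σ x))) (σ (σ y)) := by rw [hg.1.conj_conj]
    _ = starRingEnd ℂ (B (τ (σ x)) (τ (τ (σ y)))) := by rw [hg.apply_conj_conj, hg'.1.conj_conj]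
    _ = B (σ x) (τ (σ y)) := by rw [hg'.apply_conj_conj, Complex.conj_conj]

theorem IsCompactRealForm.re_apply_conj_self_pos (hBsymm : ∀ x y : L, B x y = B y x)
    (hu : IsCompactRealForm B u) {x : L} (hx : x ≠ 0) : 0 < (B (hu.1.1.conj x) x).re := by
  obtain ⟨a, ha, b, hb, rfl⟩ := hu.1.1.2 x
  have hsum : B (hu.1.1.conj (a + I • b)) (a + I • b) = B a a + B b b := by
    simp only [hu.1.1.conj_add_I_smul ha hb, map_add, map_sub, map_smul, LinearMap.sub_apply,
      LinearMap.smul_apply, smul_eq_mul, hBsymm b a]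
    linear_combination (-B b b) * I_mul_I
  have hnonneg {p : L} (hp : p ∈ u) : 0 ≤ (B p p).re := by
    rcases eq_or_ne p 0 with rfl | hp0
    · simp
    · exact (hu.2 p hp hp0).le
  rw [hsum, add_re]
  by_cases ha0 : a = 0
  · have hb0 : b ≠ 0 := by rintro rfl; simp [ha0] at hx
    linarith [hu.2 b hb hb0, hnonneg ha]
  · linarith [hu.2 a ha ha0, hnonneg hb]

theorem IsCompactRealForm.re_apply_conj_self_nonneg (hBsymm : ∀ x y : L, B x y = B y x)
    (hu : IsCompactRealForm B u) (x : L) : 0 ≤ (B (hu.1.1.conj x) x).re := by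
  rcases eq_or_ne x 0 with rfl | hx
  · simp
  · exact (hu.re_apply_conj_self_pos hBsymm hx).le

end

namespace IsCompactRealForm

variable {B : LinearMap.BilinForm ℂ L} {g g' : LieSubalgebra ℝ L}

noncomputable abbrev innerProductCore (hBsymm : ∀ x y : L, B x y = B y x)
    (hg : IsCompactRealForm B g) : InnerProductSpace.Core ℂ L where
  inner x y := B (hg.1.1.conj x) y
  conj_inner_symm x y := by
    rw [← hg.1.apply_conj_conj, hg.1.1.conj_conj, hBsymm]
  re_inner_nonneg := hg.re_apply_conj_self_nonneg hBsymm
  add_left x y z := by simp only [map_add, LinearMap.add_apply]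
  smul_left x y r := by simp only [map_smulₛₗ, LinearMap.smul_apply, smul_eq_mul, RingHom.id_apply]
  definite x hx := by
    by_contra h
    exact (hg.re_apply_conj_self_pos hBsymm h).ne' (by simp [show B (hg.1.1.conj x) x = 0 from hx])

theorem exists_lieHom_isometry_semiconj [FiniteDimensional ℂ L]
    (hBsymm : ∀ x y : L, B x y = B y x) (hg : IsCompactRealForm B g)
    (hg' : IsCompactRealForm B g') :
    ∃ φ : L →ₗ[ℂ] L, Function.Injective φ ∧ (∀ x y, φ ⁅x, y⁆ = ⁅φ x, φ y⁆) ∧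
      (∀ x y, B (φ x) (φ y) = B x y) ∧ Function.Semiconj φ hg.1.1.conj hg'.1.1.conj := by
  set σ := hg.1.1.conj
  set τ := hg'.1.1.conj
  let _ := InnerProductSpace.Core.toNormedAddCommGroup (cd := hg.innerProductCore hBsymm)
  let _ := InnerProductSpace.ofCore (hg.innerProductCore hBsymm).toCore
  have hP : (τ ∘ₛₗ σ).IsPositive := by
    refine ⟨hg.1.apply_conj_conj_conj hg'.1, fun x => ?_⟩
    change 0 ≤ (B (σ (τ (σ x))) x).re
    rw [hg.1.apply_conj_conj_conj hg'.1, hBsymm]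
    exact hg'.re_apply_conj_self_nonneg hBsymm _
  have hσ : (τ ∘ₛₗ σ) ∘ₛₗ σ ∘ₛₗ (τ ∘ₛₗ σ) = σ := by
    ext x
    simp only [LinearMap.comp_apply, hg.1.1.conj_conj, hg'.1.1.conj_conj, σ, τ]
  have hφσφ := LinearMap.congr_fun (hP.sqrt_comp_comp_sqrt hσ)
  refine ⟨hP.sqrt, ?_, fun x y => ?_, fun x y => ?_, fun x => ?_⟩
  · refine Function.Injective.of_comp (f := hP.sqrt ∘ₛₗ σ) ?_
    rw [← LinearMap.coe_comp, LinearMap.comp_assoc, hP.sqrt_comp_comp_sqrt hσ]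
    exact Function.LeftInverse.injective hg.1.1.conj_conj
  · have hβ : (LieModule.toEnd ℂ L L : L →ₗ[ℂ] L →ₗ[ℂ] L).compl₁₂ (τ ∘ₛₗ σ) (τ ∘ₛₗ σ) =
        (LieModule.toEnd ℂ L L : L →ₗ[ℂ] L →ₗ[ℂ] L).compr₂ (τ ∘ₛₗ σ) :=
      LinearMap.ext₂ fun x y => by simp [σ, τ, IsRealForm.conj_lie]
    simpa using (LinearMap.congr_fun₂
      (hP.compl₁₂_sqrt_sqrt (fun _ _ => hP.sqrt_apply_of_apply_eq_smul) hβ) x y).symm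
  · have hψ (μ : ℝ) (w : ℂ) (hw : (LinearMap.id : ℂ →ₗ[ℂ] ℂ) w = (μ : ℂ) • w) :
        (LinearMap.id : ℂ →ₗ[ℂ] ℂ) w = (√μ : ℂ) • w := by
      rcases eq_or_ne w 0 with rfl | hw0
      · simp
      obtain rfl : μ = 1 := by exact_mod_cast (mul_right_cancel₀ hw0 ((one_mul w).trans hw)).symm
      simp
    have hβ : B.compl₁₂ (τ ∘ₛₗ σ) (τ ∘ₛₗ σ) = B.compr₂ LinearMap.id :=
      LinearMap.ext₂ fun x y => by
        simp [σ, τ, hg'.1.apply_conj_conj, hg.1.apply_conj_conj]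
    simpa using LinearMap.congr_fun₂ (hP.compl₁₂_sqrt_sqrt hψ hβ) x y
  · calc hP.sqrt (σ x) = hP.sqrt (hP.sqrt (σ (hP.sqrt x))) := by rw [← hφσφ x]; rfl
      _ = (τ ∘ₛₗ σ) (σ (hP.sqrt x)) := LinearMap.congr_fun hP.sqrt_comp_sqrt _
      _ = τ (hP.sqrt x) := by simp only [LinearMap.comp_apply, σ, hg.1.1.conj_conj]

end IsCompactRealForm

theorem compactRealForms_conjugate_general [FiniteDimensional ℂ L]
    (B : LinearMap.BilinForm ℂ L) (hBsymm : ∀ x y : L, B x y = B y x)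
    (g g' : LieSubalgebra ℝ L)
    (hg : IsCompactRealForm B g) (hg' : IsCompactRealForm B g') :
    ∃ φ : L ≃ₗ⁅ℂ⁆ L, (∀ x y : L, B (φ x) (φ y) = B x y) ∧
      ⇑φ '' (g : Set L) = (g' : Set L) := by
  obtain ⟨φ, hinj, hlie, hB, hconj⟩ := hg.exists_lieHom_isometry_semiconj hBsymm hg'
  have hbij : Function.Bijective φ := ⟨hinj, LinearMap.surjective_of_injective hinj⟩
  refine ⟨LieEquiv.ofBijective { φ with map_lie' := hlie _ _ } hbij, hB, ?_⟩
  rw [hg.1.1.coe_eq_fixedPoints_conj, hg'.1.1.coe_eq_fixedPoints_conj]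
  exact hconj.image_fixedPoints hbij

/-- Any two compact real forms of `(L, B)` are related by a `ℂ`-linear
Lie algebra automorphism of `L` preserving `B`; in particular they are isomorphic as real
Lie algebras via a `B`-isometry. -/
theorem compactRealForms_conjugate [FiniteDimensional ℂ L]
    (B : LinearMap.BilinForm ℂ L) (hBsymm : ∀ x y : L, B x y = B y x)
    (hBnd : B.Nondegenerate) (g g' : LieSubalgebra ℝ L)
    (hg : IsCompactRealForm B g) (hg' : IsCompactRealForm B g') :
    ∃ φ : L ≃ₗ⁅ℂ⁆ L, (∀ x y : L, B (φ x) (φ y) = B x y) ∧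
      ⇑φ '' (g : Set L) = (g' : Set L) :=
  compactRealForms_conjugate_general B hBsymm g g' hg hg'
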